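/- In the static team problem, let q^i : Ω → ℝ^{d_i} be P-integrable random vectors for i = 1, …, N (in the paper, q^i(ω) = ∇_{u^i} L(γ^o(ω), ω)), and let γ^o be an admissible strategy profile such that ω ↦ ⟨q^i(ω), γ^i(ω) − γ^{i,o}(ω)⟩ is P-integrable for every admissible γ. Suppose the joint variational inequality holds: E[ Σ_{i=1}^N ⟨q^i(ω), γ^i(ω) − γ^{i,o}(ω)⟩ ] ≥ 0 for every admissible strategy profile γ. Then the component-wise conditional variational inequalities hold: for each i ∈ {1, …, N} and each fixed action a ∈ A^i, ⟨E[q^i | G^i](ω), a − γ^{i,o}(ω)⟩ ≥ 0 for P-a.e. ω. -/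

import Mathlib

open MeasureTheory
open scoped RealInnerProductSpace

/-!
Deviating from `γᵒ` to the constant action `a` on an arbitrary `Gⁱ`-event `s` is admissible and
changes only the `i`-th term of the sum, so the joint inequality gives
`∫_s ⟪qⁱ, a − γ^{i,o}⟫ ≥ 0` for every `s ∈ Gⁱ`, i.e. `E[⟪qⁱ, a − γ^{i,o}⟫ | Gⁱ] ≥ 0` a.s.
Pulling the `Gⁱ`-measurable factor `a − γ^{i,o}` out of the conditional expectation turns this
into `⟪E[qⁱ | Gⁱ], a − γ^{i,o}⟫ ≥ 0`.
-/

section Deviation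

variable {Ω ι : Type*} [DecidableEq ι] {E : ι → Type*}

open Classical in
noncomputable def deviateOn (γ : Ω → ∀ j, E j) (i : ι) (s : Set Ω) (a : E i) : Ω → ∀ j, E j :=
  fun ω => Function.update (γ ω) i (s.piecewise (fun _ => a) (fun ω => γ ω i) ω)

theorem deviateOn_apply_of_ne (γ : Ω → ∀ j, E j) {i j : ι} (hj : j ≠ i) (s : Set Ω) (a : E i)
    (ω : Ω) : deviateOn γ i s a ω j = γ ω j :=
  Function.update_of_ne hj _ _

theorem deviateOn_mem {A : ∀ j, Set (E j)} {γ : Ω → ∀ j, E j} (hγ : ∀ ω j, γ ω j ∈ A j)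
    {i : ι} (s : Set Ω) {a : E i} (ha : a ∈ A i) (ω : Ω) (j : ι) :
    deviateOn γ i s a ω j ∈ A j := by
  classical
  rcases eq_or_ne j i with rfl | hj
  · by_cases hω : ω ∈ s <;> simp [deviateOn, hω, ha, hγ]
  · rw [deviateOn_apply_of_ne γ hj]
    exact hγ ω j

theorem measurable_deviateOn [∀ j, MeasurableSpace (E j)] {G : ι → MeasurableSpace Ω}
    {γ : Ω → ∀ j, E j} (hγ : ∀ j, Measurable[G j] fun ω => γ ω j) {i : ι} {s : Set Ω}
    (hs : MeasurableSet[G i] s) (a : E i) (j : ι) :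
    Measurable[G j] fun ω => deviateOn γ i s a ω j := by
  classical
  rcases eq_or_ne j i with rfl | hj
  · simp only [deviateOn, Function.update_self]
    exact measurable_const.piecewise hs (hγ j)
  · simp only [deviateOn_apply_of_ne γ hj]
    exact hγ j

variable [∀ j, NormedAddCommGroup (E j)] [∀ j, InnerProductSpace ℝ (E j)]

theorem inner_deviateOn_sub_self (q : ∀ j, Ω → E j) (γ : Ω → ∀ j, E j) {i : ι} (s : Set Ω)
    (a : E i) (ω : Ω) :
    ⟪q i ω, deviateOn γ i s a ω i - γ ω i⟫ = s.indicator (fun ω => ⟪q i ω, a - γ ω i⟫) ω := by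
  classical
  by_cases hω : ω ∈ s <;> simp [deviateOn, hω]

theorem sum_inner_deviateOn_sub [Fintype ι] (q : ∀ j, Ω → E j) (γ : Ω → ∀ j, E j) (i : ι)
    (s : Set Ω) (a : E i) (ω : Ω) :
    ∑ j, ⟪q j ω, deviateOn γ i s a ω j - γ ω j⟫ =
      s.indicator (fun ω => ⟪q i ω, a - γ ω i⟫) ω := by
  rw [Fintype.sum_eq_single i fun j hj => by
    rw [deviateOn_apply_of_ne γ hj, sub_self, inner_zero_right]]
  exact inner_deviateOn_sub_self q γ s a ω

end Deviation

theorem condExp_nonneg_of_forall_setIntegral_nonneg {Ω : Type*} {m m₀ : MeasurableSpace Ω}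
    {μ : Measure Ω} (hm : m ≤ m₀) [SigmaFinite (μ.trim hm)] {g : Ω → ℝ} (hg : Integrable g μ)
    (h : ∀ s, MeasurableSet[m] s → 0 ≤ ∫ ω in s, g ω ∂μ) : 0 ≤ᵐ[μ] μ[g | m] := by
  refine ae_of_ae_trim hm <| ae_nonneg_of_forall_setIntegral_nonneg
    (integrable_condExp.trim hm stronglyMeasurable_condExp) fun s hs _ => ?_
  rw [← setIntegral_trim hm stronglyMeasurable_condExp hs, setIntegral_condExp hm hg hs]
  exact h s hs

theorem static_team_joint_VI_implies_conditional_VI_general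
    {Ω : Type*} [MeasurableSpace Ω] (P : Measure Ω) [IsProbabilityMeasure P]
    {N : ℕ} {d : Fin N → ℕ}
    (A : ∀ i, Set (EuclideanSpace ℝ (Fin (d i))))
    (G : Fin N → MeasurableSpace Ω) (hG : ∀ i, G i ≤ ‹MeasurableSpace Ω›)
    -- admissible strategy profiles:
    (Admissible : (Ω → ∀ i, EuclideanSpace ℝ (Fin (d i))) → Prop)
    (hAdm : ∀ γ, Admissible γ ↔
      (∀ i, Measurable[G i] fun ω => γ ω i) ∧ ∀ ω, ∀ i, γ ω i ∈ A i)
    (γo : Ω → ∀ i, EuclideanSpace ℝ (Fin (d i)))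
    (hγoAdm : Admissible γo)
    -- the integrable random vectors `qⁱ`:
    (q : ∀ i, Ω → EuclideanSpace ℝ (Fin (d i)))
    (hqInt : ∀ i, Integrable (q i) P)
    -- integrability of the directional terms:
    (hdirInt : ∀ γ, Admissible γ → ∀ i,
      Integrable (fun ω => ⟪q i ω, γ ω i - γo ω i⟫) P)
    -- the joint variational inequality:
    (hVI : ∀ γ, Admissible γ →
      0 ≤ ∫ ω, ∑ i, ⟪q i ω, γ ω i - γo ω i⟫ ∂P) :
    -- conclusion: the component-wise conditional variational inequalities
    ∀ i : Fin N, ∀ a ∈ A i,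
      ∀ᵐ ω ∂P, 0 ≤ ⟪(P[q i | G i]) ω, a - γo ω i⟫ := by
  intro i a ha
  obtain ⟨hγoMeas, hγoMem⟩ := (hAdm γo).mp hγoAdm
  have hdevAdm : ∀ s, MeasurableSet[G i] s → Admissible (deviateOn γo i s a) := fun s hs =>
    (hAdm _).mpr ⟨measurable_deviateOn hγoMeas hs a, deviateOn_mem hγoMem s ha⟩
  set g : Ω → ℝ := fun ω => ⟪q i ω, a - γo ω i⟫
  have hg : Integrable g P := by
    simpa only [inner_deviateOn_sub_self, Set.indicator_univ] using
      hdirInt _ (hdevAdm Set.univ MeasurableSet.univ) i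
  have hsetIntegral : ∀ s, MeasurableSet[G i] s → 0 ≤ ∫ ω in s, g ω ∂P := fun s hs => by
    simpa only [sum_inner_deviateOn_sub, integral_indicator (hG i s hs)] using
      hVI _ (hdevAdm s hs)
  have hpullOut : P[g | G i] =ᵐ[P] fun ω => ⟪(P[q i | G i]) ω, a - γo ω i⟫ :=
    condExp_bilin_of_stronglyMeasurable_right (innerSL ℝ)
      (measurable_const.sub (hγoMeas i)).stronglyMeasurable hg (hqInt i)
  filter_upwards [condExp_nonneg_of_forall_setIntegral_nonneg (hG i) hg hsetIntegral, hpullOut]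
    with ω hnonneg hω
  rwa [← hω]

/-- **From the joint variational inequality to component-wise conditional variational
inequalities.**  In the static team problem, let `q i : Ω → ℝ^{d i}` be P-integrable
(in the paper, `q i ω = ∇_{uⁱ} L (γᵒ ω, ω)`) and let `γᵒ` be admissible such that
`ω ↦ ⟪q i ω, γ i ω − γᵒ i ω⟫` is P-integrable for every admissible `γ` and every `i`.
If `E[ Σᵢ ⟪qⁱ, γⁱ − γ^{i,o}⟫ ] ≥ 0` for every admissible strategy profile `γ`, then
for each decision maker `i` and each fixed action `a ∈ A i`,
`⟪E[qⁱ | Gⁱ](ω), a − γ^{i,o}(ω)⟫ ≥ 0` for P-a.e. `ω`. -/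
theorem static_team_joint_VI_implies_conditional_VI
    {Ω : Type*} [MeasurableSpace Ω] (P : Measure Ω) [IsProbabilityMeasure P]
    {N : ℕ} {d : Fin N → ℕ}
    (A : ∀ i, Set (EuclideanSpace ℝ (Fin (d i))))
    (hAne : ∀ i, (A i).Nonempty) (hAconv : ∀ i, Convex ℝ (A i))
    (hAmeas : ∀ i, MeasurableSet (A i))
    (G : Fin N → MeasurableSpace Ω) (hG : ∀ i, G i ≤ ‹MeasurableSpace Ω›)
    -- admissible strategy profiles:
    (Admissible : (Ω → ∀ i, EuclideanSpace ℝ (Fin (d i))) → Prop)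
    (hAdm : ∀ γ, Admissible γ ↔
      (∀ i, Measurable[G i] fun ω => γ ω i) ∧ ∀ ω, ∀ i, γ ω i ∈ A i)
    (γo : Ω → ∀ i, EuclideanSpace ℝ (Fin (d i)))
    (hγoAdm : Admissible γo)
    -- the integrable random vectors `qⁱ`:
    (q : ∀ i, Ω → EuclideanSpace ℝ (Fin (d i)))
    (hqInt : ∀ i, Integrable (q i) P)
    -- integrability of the directional terms:
    (hdirInt : ∀ γ, Admissible γ → ∀ i,
      Integrable (fun ω => ⟪q i ω, γ ω i - γo ω i⟫) P)
    -- the joint variational inequality: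
    (hVI : ∀ γ, Admissible γ →
      0 ≤ ∫ ω, ∑ i, ⟪q i ω, γ ω i - γo ω i⟫ ∂P) :
    -- conclusion: the component-wise conditional variational inequalities
    ∀ i : Fin N, ∀ a ∈ A i,
      ∀ᵐ ω ∂P, 0 ≤ ⟪(P[q i | G i]) ω, a - γo ω i⟫ :=
  static_team_joint_VI_implies_conditional_VI_general P A G hG Admissible hAdm γo hγoAdm q hqInt
    hdirInt hVI
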